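/- arXiv:1204.1758 — 2 statements merged into one kernel-verified Lean document; each statement's English description precedes it below -/
import Mathlib

section
/- Let κ be an infinite field and let f ∈ κ[x,y,z] be invariant of weight (1,−1,0). Then for every commutative κ-algebra A and all tuples a ∈ A^{d₁}, b ∈ A^{d₂}, c ∈ A^{d₃}, one has f(a, 0, c) = f(0, 0, c) and f(0, b, c) = f(0, 0, c). Equivalently, substituting y = 0 into f yields a polynomial in which no x-variable occurs, and substituting x = 0 yields a polynomial in which no y-variable occurs. -/
open MvPolynomial

universe u

/-- The κ-algebra endomorphism `σ_τ` of `κ[x,y,z]` determined by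
`x_i ↦ τ·x_i`, `y_j ↦ τ⁻¹·y_j`, `z_l ↦ z_l`. -/
noncomputable def weightScaling {κ : Type*} [Field κ] (d₁ d₂ d₃ : ℕ) (τ : κˣ) :
    MvPolynomial (Fin d₁ ⊕ Fin d₂ ⊕ Fin d₃) κ →ₐ[κ]
      MvPolynomial (Fin d₁ ⊕ Fin d₂ ⊕ Fin d₃) κ :=
  MvPolynomial.aeval
    (Sum.elim (fun i => MvPolynomial.C (τ : κ) * MvPolynomial.X (Sum.inl i))
      (Sum.elim
        (fun j => MvPolynomial.C ((τ⁻¹ : κˣ) : κ) * MvPolynomial.X (Sum.inr (Sum.inl j)))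
        (fun l => MvPolynomial.X (Sum.inr (Sum.inr l)))))

/-! Scaling by `τ` multiplies the coefficient of `x^α y^β z^γ` by `τ^(|α| - |β|)`. Over an infinite
field no nonzero integer power of `τ` is identically `1`, so invariance forces `|α| = |β|` on the
support of `f`: `f` is weighted homogeneous of degree `0` for the weight `(1, -1, 0)`. Setting
`y = 0` kills every monomial with `β ≠ 0`, and the surviving ones have `α = 0` as well, so the
variables `x` drop out; symmetrically for `x = 0`. -/

theorem eq_zero_of_forall_units_zpow_eq_one {K : Type*} [Field K] [Infinite K] {n : ℤ}
    (h : ∀ τ : Kˣ, τ ^ n = 1) : n = 0 := by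
  classical
  by_contra hn
  obtain ⟨τ, hτ⟩ :=
    Infinite.exists_notMem_finset (insert 0 (Polynomial.nthRoots n.natAbs (1 : K)).toFinset)
  rw [Finset.mem_insert, not_or, Multiset.mem_toFinset,
    Polynomial.mem_nthRoots (Int.natAbs_pos.mpr hn)] at hτ
  exact hτ.2 (by simpa using congrArg Units.val (pow_natAbs_eq_one.mpr (h (Units.mk0 τ hτ.1))))

namespace MvPolynomial

variable {σ R A : Type*}

theorem coeff_aeval_C_mul_X [CommSemiring R] (s : σ → R) (f : MvPolynomial σ R) (d : σ →₀ ℕ) :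
    coeff d (aeval (fun i => C (s i) * X i) f) = (d.prod fun i k => s i ^ k) * coeff d f := by
  classical
  induction f using MvPolynomial.induction_on' with
  | monomial e a =>
    have : aeval (fun i => C (s i) * X i) (monomial e a) =
        monomial e ((e.prod fun i k => s i ^ k) * a) := by
      rw [aeval_monomial, monomial_eq]
      simp only [mul_pow, Finsupp.prod_mul, ← C_pow, ← map_finsuppProd, algebraMap_eq, C_mul]
      ring
    rw [this, coeff_monomial, coeff_monomial]
    split_ifs with h <;> simp [h]
  | add p q hp hq => simp only [map_add, coeff_add, hp, hq, mul_add]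

theorem coeff_aeval_C_zpow_mul_X [CommRing R] (w : σ → ℤ) (τ : Rˣ) (f : MvPolynomial σ R)
    (d : σ →₀ ℕ) :
    coeff d (aeval (fun i => C ((τ ^ w i : Rˣ) : R) * X i) f) =
      ((τ ^ Finsupp.weight w d : Rˣ) : R) * coeff d f := by
  rw [coeff_aeval_C_mul_X]
  congr 1
  simp only [Finsupp.weight_apply, Finsupp.sum, Finsupp.prod, ← Units.val_pow_eq_pow_val,
    ← zpow_natCast, ← zpow_mul, ← Units.coe_prod, nsmul_eq_mul, mul_comm]
  congr 1
  -- `∏ τ ^ nᵢ = τ ^ ∑ nᵢ`, read off the monoid hom `zpowersHom Rˣ τ : Multiplicative ℤ →* Rˣ`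
  simpa only [zpowersHom_apply, toAdd_prod, toAdd_ofAdd] using
    (map_prod (zpowersHom Rˣ τ) (fun i => Multiplicative.ofAdd (w i * d i)) d.support).symm

theorem isWeightedHomogeneous_zero_of_forall_aeval_C_zpow_mul_X_eq {K : Type*} [Field K]
    [Infinite K] (w : σ → ℤ) {f : MvPolynomial σ K}
    (hf : ∀ τ : Kˣ, aeval (fun i => C ((τ ^ w i : Kˣ) : K) * X i) f = f) :
    IsWeightedHomogeneous w f 0 := by
  intro d hd
  refine eq_zero_of_forall_units_zpow_eq_one (K := K) fun τ => Units.ext ?_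
  have h := congrArg (coeff d) (hf τ)
  rw [coeff_aeval_C_zpow_mul_X] at h
  exact mul_right_cancel₀ hd (h.trans (one_mul _).symm)

theorem IsWeightedHomogeneous.neg_weight [CommSemiring R] {w : σ → ℤ} {f : MvPolynomial σ R}
    {m : ℤ} (hf : IsWeightedHomogeneous w f m) : IsWeightedHomogeneous (-w) f (-m) := by
  intro d hd
  rw [← hf hd]
  simp [Finsupp.weight_apply, Finsupp.sum]

theorem IsWeightedHomogeneous.aeval_eq_aeval [CommSemiring R] [CommSemiring A] [Algebra R A]
    {w : σ → ℤ} {f : MvPolynomial σ R} (hf : IsWeightedHomogeneous w f 0) {g g' : σ → A}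
    (hneg : ∀ i, w i < 0 → g i = 0 ∧ g' i = 0) (hzero : ∀ i, w i = 0 → g i = g' i) :
    aeval g f = aeval g' f := by
  simp only [aeval_def, eval₂_eq]
  refine Finset.sum_congr rfl fun d hd => congrArg _ ?_
  by_cases hd_neg : ∃ i ∈ d.support, w i < 0
  · obtain ⟨i, hi, hwi⟩ := hd_neg
    have hdi : d i ≠ 0 := Finsupp.mem_support_iff.mp hi
    rw [Finset.prod_eq_zero hi (by rw [(hneg i hwi).1, zero_pow hdi]),
      Finset.prod_eq_zero hi (by rw [(hneg i hwi).2, zero_pow hdi])]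
  · push Not at hd_neg
    have hw : ∑ i ∈ d.support, (d i : ℤ) * w i = 0 := by
      simpa [Finsupp.weight_apply, Finsupp.sum] using hf (mem_support_iff.mp hd)
    rw [Finset.sum_eq_zero_iff_of_nonneg fun i hi => mul_nonneg (by positivity) (hd_neg i hi)]
      at hw
    refine Finset.prod_congr rfl fun i hi => ?_
    rw [hzero i ((mul_eq_zero.mp (hw i hi)).resolve_left (by simpa using hi))]

theorem notMem_vars_aeval [CommSemiring R] {τ : Type*} {g : σ → MvPolynomial τ R} {j : τ}
    (f : MvPolynomial σ R) (h : ∀ i, j ∉ (g i).vars) : j ∉ (aeval g f).vars := by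
  rw [aeval_eq_bind₁]
  intro hj
  obtain ⟨i, -, hi⟩ := mem_vars_bind₁ g f hj
  exact h i hi

end MvPolynomial

def scalingWeight (d₁ d₂ d₃ : ℕ) : Fin d₁ ⊕ Fin d₂ ⊕ Fin d₃ → ℤ :=
  Sum.elim 1 (Sum.elim (-1) 0)

theorem weightScaling_eq_aeval {κ : Type*} [Field κ] (d₁ d₂ d₃ : ℕ) (τ : κˣ) :
    weightScaling d₁ d₂ d₃ τ =
      aeval (fun i => C ((τ ^ scalingWeight d₁ d₂ d₃ i : κˣ) : κ) * X i) := by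
  unfold weightScaling
  congr 1
  funext i
  rcases i with i | j | l <;> simp [scalingWeight]

section scalingWeight

variable {κ A : Type*} [Field κ] [CommRing A] [Algebra κ A] {d₁ d₂ d₃ : ℕ}
  {f : MvPolynomial (Fin d₁ ⊕ Fin d₂ ⊕ Fin d₃) κ}

theorem MvPolynomial.IsWeightedHomogeneous.aeval_eq_aeval_zero_x_of_zero_y
    (hf : IsWeightedHomogeneous (scalingWeight d₁ d₂ d₃) f 0) (a : Fin d₁ → A) (c : Fin d₃ → A) :
    aeval (Sum.elim a (Sum.elim 0 c)) f = aeval (Sum.elim 0 (Sum.elim 0 c)) f :=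
  hf.aeval_eq_aeval (by rintro (i | j | l) h <;> simp_all [scalingWeight])
    (by rintro (i | j | l) h <;> simp_all [scalingWeight])

theorem MvPolynomial.IsWeightedHomogeneous.aeval_eq_aeval_zero_y_of_zero_x
    (hf : IsWeightedHomogeneous (scalingWeight d₁ d₂ d₃) f 0) (b : Fin d₂ → A) (c : Fin d₃ → A) :
    aeval (Sum.elim 0 (Sum.elim b c)) f = aeval (Sum.elim 0 (Sum.elim 0 c)) f :=
  (neg_zero (G := ℤ) ▸ hf.neg_weight).aeval_eq_aeval
    (by rintro (i | j | l) h <;> simp_all [scalingWeight])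
    (by rintro (i | j | l) h <;> simp_all [scalingWeight])

end scalingWeight

/-- If `f` is invariant of weight `(1,-1,0)` over an infinite field, then
`f(a,0,c) = f(0,0,c)` and `f(0,b,c) = f(0,0,c)` for all points with coordinates in any
commutative `κ`-algebra; equivalently, substituting `y = 0` (resp. `x = 0`) in `f` yields
a polynomial in which no `x`-variable (resp. no `y`-variable) occurs. -/
theorem eval_at_zero_of_weight_invariant
    {κ : Type*} [Field κ] [Infinite κ] (d₁ d₂ d₃ : ℕ)
    (f : MvPolynomial (Fin d₁ ⊕ Fin d₂ ⊕ Fin d₃) κ)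
    (hf : ∀ τ : κˣ, weightScaling d₁ d₂ d₃ τ f = f) :
    (∀ (A : Type u) [CommRing A] [Algebra κ A]
        (a : Fin d₁ → A) (b : Fin d₂ → A) (c : Fin d₃ → A),
        MvPolynomial.aeval (Sum.elim a (Sum.elim 0 c)) f =
            MvPolynomial.aeval (Sum.elim 0 (Sum.elim (0 : Fin d₂ → A) c)) f ∧
          MvPolynomial.aeval (Sum.elim 0 (Sum.elim b c)) f =
            MvPolynomial.aeval (Sum.elim (0 : Fin d₁ → A) (Sum.elim 0 c)) f) ∧
      (∀ i : Fin d₁, Sum.inl i ∉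
        (MvPolynomial.aeval
          (Sum.elim (fun i => MvPolynomial.X (Sum.inl i) :
              Fin d₁ → MvPolynomial (Fin d₁ ⊕ Fin d₂ ⊕ Fin d₃) κ)
            (Sum.elim (fun _ => 0)
              (fun l => MvPolynomial.X (Sum.inr (Sum.inr l))))) f).vars) ∧
      (∀ j : Fin d₂, Sum.inr (Sum.inl j) ∉
        (MvPolynomial.aeval
          (Sum.elim (fun _ => 0 :
              Fin d₁ → MvPolynomial (Fin d₁ ⊕ Fin d₂ ⊕ Fin d₃) κ)
            (Sum.elim (fun j => MvPolynomial.X (Sum.inr (Sum.inl j)))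
              (fun l => MvPolynomial.X (Sum.inr (Sum.inr l))))) f).vars) := by
  have hw : IsWeightedHomogeneous (scalingWeight d₁ d₂ d₃) f 0 :=
    isWeightedHomogeneous_zero_of_forall_aeval_C_zpow_mul_X_eq _ fun τ => by
      rw [← weightScaling_eq_aeval, hf]
  refine ⟨fun A _ _ a b c => ⟨hw.aeval_eq_aeval_zero_x_of_zero_y a c,
    hw.aeval_eq_aeval_zero_y_of_zero_x b c⟩, fun i => ?_, fun j => ?_⟩
  · rw [← Pi.zero_def, hw.aeval_eq_aeval_zero_x_of_zero_y]
    exact notMem_vars_aeval f (by rintro (k | k | k) <;> simp)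
  · rw [← Pi.zero_def, hw.aeval_eq_aeval_zero_y_of_zero_x]
    exact notMem_vars_aeval f (by rintro (k | k | k) <;> simp)
end

section
/- Assume K is infinite. Let γ > 0 and ε ∈ (0,1). Define X⁰_{γ,ε} := {(x,y,z) ∈ X_{γ,ε} : x = 0 or y = 0}, Y⁰_{γ,ε} := {(x,y) ∈ K^{d₁} × K^{d₂} : (x = 0 or y = 0), ‖x‖ < γ⁻¹, ‖y‖ ≤ γε}, and D_ε := {z ∈ K^{d₃} : ‖z‖ ≤ ε, f(0,0,z) = t}. Then X⁰_{γ,ε} decomposes as the product Y⁰_{γ,ε} × D_ε: a point (x,y,z) lies in X⁰_{γ,ε} if and only if (x,y) ∈ Y⁰_{γ,ε} and z ∈ D_ε. -/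
/-
When `x = 0`, invariance under `(x, y, z) ↦ (τx, τ⁻¹y, z)` makes `s ↦ f(0, s y, z)` constant
on `Kˣ`. It is a polynomial in `s`, so over an infinite field it is constant, and
`f(0, y, z) = f(0, 0, z)`; symmetrically when `y = 0`. On `{x = 0 ∨ y = 0}` the equation
`f = t` is therefore the condition `f(0, 0, z) = t` on `z` alone.
-/

open MvPolynomial

/-- The sup-norm `max_i |w_i|` of a tuple, with value `0` for the empty tuple. -/
noncomputable def tnorm {K : Type*} [Field K] (v : AbsoluteValue K ℝ) {n : ℕ}
    (w : Fin n → K) : ℝ :=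
  Finset.fold max 0 (fun i => v (w i)) Finset.univ

variable {K : Type*} [Field K]

/-- Points of `K^{d₁} × K^{d₂} × K^{d₃}`. -/
abbrev Pt (K : Type*) (d₁ d₂ d₃ : ℕ) := (Fin d₁ → K) × (Fin d₂ → K) × (Fin d₃ → K)

/-- Evaluation of `f ∈ K[x,y,z]` at a point of `K^{d₁} × K^{d₂} × K^{d₃}`. -/
noncomputable def evalP {d₁ d₂ d₃ : ℕ}
    (f : MvPolynomial (Fin d₁ ⊕ Fin d₂ ⊕ Fin d₃) K) (p : Pt K d₁ d₂ d₃) : K :=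
  MvPolynomial.eval (Sum.elim p.1 (Sum.elim p.2.1 p.2.2)) f

/-- The weight-`(1,-1,0)` scaling map `σ_τ : (x,y,z) ↦ (τx, τ⁻¹y, z)`. -/
def scl {d₁ d₂ d₃ : ℕ} (τ : Kˣ) (p : Pt K d₁ d₂ d₃) : Pt K d₁ d₂ d₃ :=
  (fun i => (τ : K) * p.1 i, fun j => ((τ⁻¹ : Kˣ) : K) * p.2.1 j, p.2.2)

/-- The compact domain `A_{γ,ε}`. -/
noncomputable def Aset {d₁ d₂ d₃ : ℕ} (v : AbsoluteValue K ℝ)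
    (f : MvPolynomial (Fin d₁ ⊕ Fin d₂ ⊕ Fin d₃) K) (t : K) (γ ε : ℝ) :
    Set (Pt K d₁ d₂ d₃) :=
  {p | tnorm v p.1 ≤ γ⁻¹ ∧ tnorm v p.2.1 ≤ γ * ε ∧ tnorm v p.2.2 ≤ ε ∧ evalP f p = t}

/-- The domain `X_{γ,ε} ⊆ A_{γ,ε}` where `‖x‖ < γ⁻¹`. -/
noncomputable def Xset {d₁ d₂ d₃ : ℕ} (v : AbsoluteValue K ℝ)
    (f : MvPolynomial (Fin d₁ ⊕ Fin d₂ ⊕ Fin d₃) K) (t : K) (γ ε : ℝ) :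
    Set (Pt K d₁ d₂ d₃) :=
  {p ∈ Aset v f t γ ε | tnorm v p.1 < γ⁻¹}

/-- `B_{γ,ε} := A_{γ,ε} \ X_{γ,ε}`. -/
noncomputable def Bset {d₁ d₂ d₃ : ℕ} (v : AbsoluteValue K ℝ)
    (f : MvPolynomial (Fin d₁ ⊕ Fin d₂ ⊕ Fin d₃) K) (t : K) (γ ε : ℝ) :
    Set (Pt K d₁ d₂ d₃) :=
  Aset v f t γ ε \ Xset v f t γ ε

theorem MvPolynomial.eval_eq_of_eval_line_eq {σ : Type*} [Infinite K]
    (f : MvPolynomial σ K) (a b : σ → K) (c : K)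
    (h : ∀ s : K, s ≠ 0 → eval (a + s • b) f = c) : eval a f = c := by
  set g : Polynomial K :=
    aeval (fun i => Polynomial.C (a i) + Polynomial.C (b i) * Polynomial.X) f
  have hg : ∀ s, g.eval s = eval (a + s • b) f := fun s => by
    have hline : (fun i => Polynomial.aeval s
        (Polynomial.C (a i) + Polynomial.C (b i) * Polynomial.X)) = a + s • b := by
      ext i; simp [mul_comm (b i)]
    rw [← Polynomial.coe_aeval_eq_eval, comp_aeval_apply, hline]
    rfl
  have hgc : g = Polynomial.C c := Polynomial.eq_of_infinite_eval_eq _ _ <|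
    (Set.finite_singleton (0 : K)).infinite_compl.mono fun s hs => by simp [hg, h s hs]
  simpa [hg] using congrArg (Polynomial.eval 0) hgc

section ScalingInvariant

variable [Infinite K] {d₁ d₂ d₃ : ℕ} {f : MvPolynomial (Fin d₁ ⊕ Fin d₂ ⊕ Fin d₃) K}

theorem evalP_zero_left (hf : ∀ (τ : Kˣ) (p : Pt K d₁ d₂ d₃), evalP f (scl τ p) = evalP f p)
    (y : Fin d₂ → K) (z : Fin d₃ → K) : evalP f (0, y, z) = evalP f (0, 0, z) := by
  have hline : ∀ s : K, s ≠ 0 →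
      eval (Sum.elim (0 : Fin d₁ → K) (Sum.elim (0 : Fin d₂ → K) z) +
        s • Sum.elim (0 : Fin d₁ → K) (Sum.elim y (0 : Fin d₃ → K))) f = evalP f (0, y, z) := by
    intro s hs
    rw [← hf (Units.mk0 s hs)⁻¹ (0, y, z)]
    unfold evalP scl
    congr 2
    ext (i | j | k) <;> simp
  exact (eval_eq_of_eval_line_eq f _ _ _ hline).symm

theorem evalP_zero_middle (hf : ∀ (τ : Kˣ) (p : Pt K d₁ d₂ d₃), evalP f (scl τ p) = evalP f p)
    (x : Fin d₁ → K) (z : Fin d₃ → K) : evalP f (x, 0, z) = evalP f (0, 0, z) := by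
  have hline : ∀ s : K, s ≠ 0 →
      eval (Sum.elim (0 : Fin d₁ → K) (Sum.elim (0 : Fin d₂ → K) z) +
        s • Sum.elim x (0 : Fin d₂ ⊕ Fin d₃ → K)) f = evalP f (x, 0, z) := by
    intro s hs
    rw [← hf (Units.mk0 s hs) (x, 0, z)]
    unfold evalP scl
    congr 2
    ext (i | j | k) <;> simp
  exact (eval_eq_of_eval_line_eq f _ _ _ hline).symm

theorem evalP_eq_evalP_zero_zero
    (hf : ∀ (τ : Kˣ) (p : Pt K d₁ d₂ d₃), evalP f (scl τ p) = evalP f p)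
    {p : Pt K d₁ d₂ d₃} (hp : p.1 = 0 ∨ p.2.1 = 0) : evalP f p = evalP f (0, 0, p.2.2) := by
  obtain ⟨x, y, z⟩ := p
  rcases hp with rfl | rfl
  exacts [evalP_zero_left hf y z, evalP_zero_middle hf x z]

end ScalingInvariant

theorem X0_eq_prod_general {d₁ d₂ d₃ : ℕ} [Infinite K] (v : AbsoluteValue K ℝ)
    (f : MvPolynomial (Fin d₁ ⊕ Fin d₂ ⊕ Fin d₃) K) (t : K)
    (hf : ∀ (τ : Kˣ) (p : Pt K d₁ d₂ d₃), evalP f (scl τ p) = evalP f p)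
    (γ ε : ℝ) :
    ∀ p : Pt K d₁ d₂ d₃,
      (p ∈ Xset v f t γ ε ∧ (p.1 = 0 ∨ p.2.1 = 0)) ↔
        (((p.1 = 0 ∨ p.2.1 = 0) ∧ tnorm v p.1 < γ⁻¹ ∧ tnorm v p.2.1 ≤ γ * ε) ∧
          (tnorm v p.2.2 ≤ ε ∧
            MvPolynomial.eval (Sum.elim (0 : Fin d₁ → K)
              (Sum.elim (0 : Fin d₂ → K) p.2.2)) f = t)) := by
  intro p
  simp only [Xset, Aset, Set.mem_ofPred_eq]
  constructor
  · rintro ⟨⟨⟨-, hy, hz, hval⟩, hx⟩, hp⟩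
    exact ⟨⟨hp, hx, hy⟩, hz, (evalP_eq_evalP_zero_zero hf hp).symm.trans hval⟩
  · rintro ⟨⟨hp, hx, hy⟩, hz, hval⟩
    exact ⟨⟨⟨hx.le, hy, hz, (evalP_eq_evalP_zero_zero hf hp).trans hval⟩, hx⟩, hp⟩

/-- For `K` infinite, the locus `X⁰_{γ,ε} = {(x,y,z) ∈ X_{γ,ε} : x = 0 ∨ y = 0}`
decomposes as the product `Y⁰_{γ,ε} × D_ε`: a point `(x,y,z)` lies in `X⁰_{γ,ε}` iff
`(x,y) ∈ Y⁰_{γ,ε}` and `z ∈ D_ε`. -/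
theorem X0_eq_prod {d₁ d₂ d₃ : ℕ} [Infinite K] (v : AbsoluteValue K ℝ)
    (f : MvPolynomial (Fin d₁ ⊕ Fin d₂ ⊕ Fin d₃) K) (t : K)
    (hf : ∀ (τ : Kˣ) (p : Pt K d₁ d₂ d₃), evalP f (scl τ p) = evalP f p)
    (γ ε : ℝ) (hγ : 0 < γ) (hε : ε ∈ Set.Ioo (0 : ℝ) 1) :
    ∀ p : Pt K d₁ d₂ d₃,
      (p ∈ Xset v f t γ ε ∧ (p.1 = 0 ∨ p.2.1 = 0)) ↔
        (((p.1 = 0 ∨ p.2.1 = 0) ∧ tnorm v p.1 < γ⁻¹ ∧ tnorm v p.2.1 ≤ γ * ε) ∧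
          (tnorm v p.2.2 ≤ ε ∧
            MvPolynomial.eval (Sum.elim (0 : Fin d₁ → K)
              (Sum.elim (0 : Fin d₂ → K) p.2.2)) f = t)) :=
  X0_eq_prod_general v f t hf γ ε
end
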